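/- Let α, σ, ξ be real numbers with 0 < α < 1, σ > 0 and ξ > 0. Then |Γ(σ+iξ) / Γ(σ+2α+iξ)| ≤ Γ(σ) / Γ(σ+2α), where on the left Γ is the complex Gamma function and |·| is the complex modulus, and on the right Γ is the real Gamma function. -/

import Mathlib

/-!
Writing `Γ(s) / Γ(s + a) = B(s, a) / Γ(a)` with Euler's Beta integral, the claim reduces to
`|B(s, a)| ≤ B(Re s, a)`, which holds because `|x ^ (s - 1)| = x ^ (Re s - 1)` on `(0, 1)`.
-/

open intervalIntegral MeasureTheory

namespace Complex

theorem betaIntegral_ofReal (u v : ℝ) :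
    betaIntegral u v = ((∫ x : ℝ in 0..1, x ^ (u - 1) * (1 - x) ^ (v - 1) : ℝ) : ℂ) := by
  rw [betaIntegral, ← intervalIntegral.integral_ofReal]
  refine intervalIntegral.integral_congr fun x hx => ?_
  rw [Set.uIcc_of_le zero_le_one] at hx
  push_cast
  rw [ofReal_cpow hx.1, ← ofReal_one, ← ofReal_sub, ofReal_cpow (sub_nonneg.mpr hx.2)]
  push_cast
  ring

theorem norm_betaIntegral_le (s t : ℂ) :
    ‖betaIntegral s t‖ ≤ ∫ x : ℝ in 0..1, x ^ (s.re - 1) * (1 - x) ^ (t.re - 1) := by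
  refine (intervalIntegral.norm_integral_le_integral_norm zero_le_one).trans_eq
    (integral_congr_ae ?_)
  filter_upwards [compl_mem_ae_iff.mpr (measure_singleton (1 : ℝ))] with x hx_ne hx
  rw [Set.uIoc_of_le zero_le_one] at hx
  have hx1 : 0 < 1 - x := sub_pos.mpr (lt_of_le_of_ne hx.2 hx_ne)
  rw [norm_mul, ← ofReal_one, ← ofReal_sub, norm_cpow_eq_rpow_re_of_pos hx.1,
    norm_cpow_eq_rpow_re_of_pos hx1]
  simp

end Complex

theorem Real.integral_rpow_mul_one_sub_rpow {u v : ℝ} (hu : 0 < u) (hv : 0 < v) :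
    ∫ x : ℝ in 0..1, x ^ (u - 1) * (1 - x) ^ (v - 1) =
      Real.Gamma u * Real.Gamma v / Real.Gamma (u + v) := by
  have h := Complex.Gamma_mul_Gamma_eq_betaIntegral (s := u) (t := v)
    (by simpa using hu) (by simpa using hv)
  rw [Complex.betaIntegral_ofReal, ← Complex.ofReal_add, Complex.Gamma_ofReal,
    Complex.Gamma_ofReal, Complex.Gamma_ofReal] at h
  rw [eq_div_iff (Real.Gamma_pos_of_pos (add_pos hu hv)).ne']
  exact_mod_cast (mul_comm _ _).trans h.symm

theorem Complex.norm_Gamma_div_Gamma_add_le {s : ℂ} {a : ℝ} (hs : 0 < s.re) (ha : 0 < a) :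
    ‖Gamma s / Gamma (s + a)‖ ≤ Real.Gamma s.re / Real.Gamma (s.re + a) := by
  have hΓa := Real.Gamma_pos_of_pos ha
  have hratio : Gamma s / Gamma (s + a) = betaIntegral s a / Gamma a := by
    rw [div_eq_div_iff (Gamma_ne_zero_of_re_pos (by simpa using add_pos hs ha))
      (Gamma_ne_zero_of_re_pos (by simpa using ha)),
      Gamma_mul_Gamma_eq_betaIntegral hs (by simpa using ha)]
    ring
  calc ‖Gamma s / Gamma (s + a)‖ = ‖betaIntegral s a‖ / Real.Gamma a := by
        rw [hratio, norm_div, Gamma_ofReal, norm_real, Real.norm_of_nonneg hΓa.le]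
    _ ≤ (∫ x : ℝ in 0..1, x ^ (s.re - 1) * (1 - x) ^ (a - 1)) / Real.Gamma a := by
        gcongr
        simpa using norm_betaIntegral_le s a
    _ = Real.Gamma s.re / Real.Gamma (s.re + a) := by
        rw [Real.integral_rpow_mul_one_sub_rpow hs ha]
        field_simp

theorem abs_Gamma_ratio_le
    (α σ ξ : ℝ) (hα : 0 < α) (hσ : 0 < σ) :
    ‖Complex.Gamma ((σ : ℂ) + Complex.I * (ξ : ℂ)) /
        Complex.Gamma ((σ : ℂ) + 2 * (α : ℂ) + Complex.I * (ξ : ℂ))‖ ≤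
      Real.Gamma σ / Real.Gamma (σ + 2 * α) := by
  have h := Complex.norm_Gamma_div_Gamma_add_le (s := σ + Complex.I * ξ) (a := 2 * α)
    (by simpa using hσ) (by positivity)
  have hre : ((σ : ℂ) + Complex.I * ξ).re = σ := by simp
  rw [hre] at h
  convert h using 4
  push_cast
  ring
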